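/- arXiv:2401.02718 — 5 statements merged into one kernel-verified Lean document; each statement's English description precedes it below -/
import Mathlib

section
/- Let K ≥ 1 be a natural number, N ≥ 1, let c : Fin N → ℝ take values in {0,1} (correctness indicators) and let p : Fin N → ℝ satisfy 1/K ≤ p i ≤ 1 for all i (confidences). Let q = (∑ i, c i)/N be the accuracy. Then for every partition of Fin N into finitely many nonempty bins B_1, …, B_M, the expected calibration error ECE = ∑_{m=1}^{M} (|B_m|/N) · |acc(B_m) − conf(B_m)|, where acc(B) = (∑_{i∈B} c i)/|B| and conf(B) = (∑_{i∈B} p i)/|B|, satisfies ECE ≤ 1 − q/K. -/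
/-- Upper-bound half of Proposition 1: for a `K`-class classifier on `N`
datapoints with correctness indicators `c : Fin N → {0,1}`, confidences
`p : Fin N → [1/K, 1]`, and accuracy `q = (∑ i, c i)/N`, every binning of
the datapoints into nonempty bins yields an expected calibration error
`ECE = ∑ m, (|B m|/N) · |acc(B m) − conf(B m)|` at most `1 - q/K`. -/
theorem ece_upper_bound (K N : ℕ) (hK : 1 ≤ K) (hN : 1 ≤ N)
    (c p : Fin N → ℝ)
    (hc : ∀ i, c i = 0 ∨ c i = 1)
    (hp : ∀ i, 1 / (K : ℝ) ≤ p i ∧ p i ≤ 1)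
    (M : ℕ) (B : Fin M → Finset (Fin N))
    (hBne : ∀ m, (B m).Nonempty)
    (hBdisj : ∀ m m' : Fin M, m ≠ m' → Disjoint (B m) (B m'))
    (hBcover : ∀ i : Fin N, ∃ m, i ∈ B m) :
    ∑ m : Fin M, ((B m).card : ℝ) / (N : ℝ) *
        |(∑ i ∈ B m, c i) / ((B m).card : ℝ) - (∑ i ∈ B m, p i) / ((B m).card : ℝ)|
      ≤ 1 - ((∑ i, c i) / (N : ℝ)) / (K : ℝ) := by
  have hNpos : (0:ℝ) < N := by exact_mod_cast hN
  have hKpos : (0:ℝ) < K := by exact_mod_cast hK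
  have key : ∀ i, |c i - p i| ≤ 1 - c i / K := by
    intro i
    rcases hc i with h | h <;> rcases hp i with ⟨h1, h2⟩
    · rw [h, abs_sub_comm, sub_zero]
      have h0 : (0:ℝ) ≤ p i := le_trans (by positivity) h1
      rw [abs_of_nonneg h0]
      simpa using h2
    · rw [h, abs_of_nonneg (by linarith : (0:ℝ) ≤ 1 - p i)]
      have hK1 : 1 / (K:ℝ) ≤ p i := h1
      linarith
  have hpart : ∀ f : Fin N → ℝ, ∑ m : Fin M, ∑ i ∈ B m, f i = ∑ i, f i := by
    intro f
    rw [← Finset.sum_biUnion (fun a _ b _ hab => hBdisj a b hab)]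
    congr 1
    ext i
    simpa [Finset.mem_biUnion] using hBcover i
  have bin : ∀ m : Fin M,
      ((B m).card : ℝ) / (N : ℝ) *
        |(∑ i ∈ B m, c i) / ((B m).card : ℝ) - (∑ i ∈ B m, p i) / ((B m).card : ℝ)|
      ≤ ∑ i ∈ B m, (1 - c i / K) / N := by
    intro m
    have hcard : (0:ℝ) < ((B m).card : ℝ) := by
      exact_mod_cast Finset.card_pos.mpr (hBne m)
    have e1 : ((B m).card : ℝ) / (N : ℝ) *
        |(∑ i ∈ B m, c i) / ((B m).card : ℝ) - (∑ i ∈ B m, p i) / ((B m).card : ℝ)|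
        = |∑ i ∈ B m, (c i - p i)| / N := by
      rw [div_sub_div_same, abs_div, abs_of_pos hcard, Finset.sum_sub_distrib]
      field_simp
    rw [e1]
    calc |∑ i ∈ B m, (c i - p i)| / N
        ≤ (∑ i ∈ B m, |c i - p i|) / N := by
          gcongr
          exact Finset.abs_sum_le_sum_abs _ _
      _ ≤ (∑ i ∈ B m, (1 - c i / K)) / N := by
          gcongr with i hi
          exact key i
      _ = ∑ i ∈ B m, (1 - c i / K) / N := by rw [Finset.sum_div]
  calc ∑ m : Fin M, ((B m).card : ℝ) / (N : ℝ) *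
        |(∑ i ∈ B m, c i) / ((B m).card : ℝ) - (∑ i ∈ B m, p i) / ((B m).card : ℝ)|
      ≤ ∑ m : Fin M, ∑ i ∈ B m, (1 - c i / K) / N := Finset.sum_le_sum fun m _ => bin m
    _ = ∑ i, (1 - c i / K) / N := hpart _
    _ = 1 - ((∑ i, c i) / (N : ℝ)) / (K : ℝ) := by
        rw [← Finset.sum_div, Finset.sum_sub_distrib]
        simp only [Finset.sum_const, Finset.card_univ, Fintype.card_fin, nsmul_eq_mul, mul_one,
          ← Finset.sum_div]
        field_simp
end

section
/- Let K ≥ 2 be a natural number, N ≥ 1, and let c : Fin N → ℝ take values in {0,1} with accuracy q = (∑ i, c i)/N, and suppose 0 < q < 1 (both correctly and incorrectly classified points exist). Define the Maximum Miscalibration Attack confidence assignment p : Fin N → ℝ by p i = 1 if c i = 0 and p i = 1/K if c i = 1. Then, taking the two bins B₁ = {i : c i = 1} and B₂ = {i : c i = 0}, the expected calibration error ECE = ∑_m (|B_m|/N)·|acc(B_m) − conf(B_m)| equals q·(1 − 1/K) + (1 − q)·1 = 1 − q/K. -/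
/-- Attainment half of Proposition 1: the Maximum Miscalibration Attack,
which assigns confidence `1` to misclassified points and `1/K` to correctly
classified points, produces (with the two bins being the correctly and the
incorrectly classified points) an expected calibration error equal to
`q·(1 − 1/K) + (1 − q)·1 = 1 − q/K`. -/
theorem mma_achieves_max_ece (K N : ℕ) (hK : 2 ≤ K) (hN : 1 ≤ N)
    (c : Fin N → ℝ) (hc : ∀ i, c i = 0 ∨ c i = 1)
    (q : ℝ) (hq : q = (∑ i, c i) / (N : ℝ)) (hq0 : 0 < q) (hq1 : q < 1)
    (p : Fin N → ℝ)
    (hp0 : ∀ i, c i = 0 → p i = 1)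
    (hp1 : ∀ i, c i = 1 → p i = 1 / (K : ℝ)) :
    (let B₁ := Finset.univ.filter (fun i => c i = 1)
     let B₂ := Finset.univ.filter (fun i => c i = 0)
     ((B₁.card : ℝ) / (N : ℝ) *
        |(∑ i ∈ B₁, c i) / (B₁.card : ℝ) - (∑ i ∈ B₁, p i) / (B₁.card : ℝ)| +
      (B₂.card : ℝ) / (N : ℝ) *
        |(∑ i ∈ B₂, c i) / (B₂.card : ℝ) - (∑ i ∈ B₂, p i) / (B₂.card : ℝ)|))
      = q * (1 - 1 / (K : ℝ)) + (1 - q) * 1 ∧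
    q * (1 - 1 / (K : ℝ)) + (1 - q) * 1 = 1 - q / (K : ℝ) := by
  have hK0 : (0:ℝ) < (K:ℝ) := by positivity
  have hN0 : (0:ℝ) < (N:ℝ) := by exact_mod_cast hN
  set B₁ := Finset.univ.filter (fun i => c i = 1) with hB₁
  set B₂ := Finset.univ.filter (fun i => c i = 0) with hB₂
  -- sums over bins
  have hsc1 : ∑ i ∈ B₁, c i = (B₁.card : ℝ) := by
    rw [Finset.sum_congr rfl (fun i hi => (Finset.mem_filter.mp hi).2)]
    simp; rfl
  have hsc2 : ∑ i ∈ B₂, c i = 0 := by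
    rw [Finset.sum_congr rfl (fun i hi => (Finset.mem_filter.mp hi).2)]
    simp
  have hsp1 : ∑ i ∈ B₁, p i = (B₁.card : ℝ) * (1 / (K:ℝ)) := by
    rw [Finset.sum_congr rfl (fun i hi => hp1 i (Finset.mem_filter.mp hi).2)]
    simp [mul_comm]; exact Or.inl rfl
  have hsp2 : ∑ i ∈ B₂, p i = (B₂.card : ℝ) := by
    rw [Finset.sum_congr rfl (fun i hi => hp0 i (Finset.mem_filter.mp hi).2)]
    simp; rfl
  -- total sum
  have hsplit : ∑ i, c i = (B₁.card : ℝ) := by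
    have : ∑ i, c i = ∑ i ∈ B₁, c i + ∑ i ∈ B₂, c i := by
      rw [← Finset.sum_filter_add_sum_filter_not Finset.univ (fun i => c i = 1) c]
      congr 1
      apply Finset.sum_congr
      · ext i; simp only [Finset.mem_filter, hB₂]
        constructor
        · rintro ⟨h1, h2⟩; exact ⟨h1, (hc i).resolve_right h2⟩
        · rintro ⟨h1, h2⟩; exact ⟨h1, by rw [h2]; norm_num⟩
      · intros; rfl
    rw [this, hsc1, hsc2, add_zero]
  have hqcard : q = (B₁.card : ℝ) / (N : ℝ) := by rw [hq, hsplit]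
  have hcard1 : (0:ℝ) < (B₁.card : ℝ) := by
    by_contra h
    push_neg at h
    have : (B₁.card : ℝ) = 0 := le_antisymm h (by positivity)
    rw [hqcard, this] at hq0; simp at hq0
  have hcardsum : (B₁.card : ℝ) + (B₂.card : ℝ) = (N : ℝ) := by
    have : B₁.card + B₂.card = N := by
      rw [hB₁, hB₂]
      have : Finset.univ.filter (fun i => c i = 0) =
          Finset.univ.filter (fun i => ¬ c i = 1) := by
        ext i; simp only [Finset.mem_filter]
        constructor
        · rintro ⟨h1, h2⟩; exact ⟨h1, by rw [h2]; norm_num⟩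
        · rintro ⟨h1, h2⟩; exact ⟨h1, (hc i).resolve_right h2⟩
      rw [this, Finset.card_filter_add_card_filter_not]
      simp
    exact_mod_cast this
  have hcard2 : (0:ℝ) < (B₂.card : ℝ) := by
    by_contra h
    push_neg at h
    have h0 : (B₂.card : ℝ) = 0 := le_antisymm h (by positivity)
    rw [h0, add_zero] at hcardsum
    rw [hqcard, hcardsum, div_self hN0.ne'] at hq1
    exact lt_irrefl _ hq1
  constructor
  · simp only [hsc1, hsc2, hsp1, hsp2, zero_div, div_self hcard1.ne',
      mul_div_assoc]
    rw [show (B₁.card:ℝ) * (1/(K:ℝ) / (B₁.card:ℝ)) = 1/(K:ℝ) by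
      field_simp, div_self hcard2.ne']
    have hKle : 1/(K:ℝ) ≤ 1 := by
      rw [div_le_one hK0]; exact_mod_cast Nat.one_le_of_lt hK
    rw [abs_of_nonneg (by linarith), show (0:ℝ) - 1 = -1 by ring, abs_neg, abs_one]
    have hq2 : (B₂.card : ℝ) / (N : ℝ) = 1 - (B₁.card : ℝ) / (N : ℝ) := by
      field_simp
      linarith
    rw [hqcard, hq2]
  · ring
end

section
/- Let K ≥ 2 be a natural number, N ≥ 1, and let c : Fin N → ℝ take values in {0,1} with accuracy q = (∑ i, c i)/N, and suppose 0 < q < 1. For a confidence assignment p : Fin N → ℝ with 1/K ≤ p i ≤ 1 for all i, define ECE(p) as the expected calibration error computed by grouping datapoints into bins according to equal confidence value (the fibers of p), i.e. ECE(p) = ∑_{v ∈ image of p} (|p⁻¹(v)|/N)·|acc(p⁻¹(v)) − v|. Then 1 − q/K is the greatest value of ECE(p) over all such confidence assignments p: every admissible p satisfies ECE(p) ≤ 1 − q/K, and the assignment p i = 1 for c i = 0 and p i = 1/K for c i = 1 achieves ECE(p) = 1 − q/K. -/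
open Finset

/-- Expected calibration error when datapoints are binned by their exact
confidence value (the fibers of the confidence assignment `p`):
`ECE(p) = ∑_{v ∈ image p} (|p⁻¹(v)|/N) · |acc(p⁻¹(v)) − v|`, where
`acc(B)` is the average of the correctness indicator `c` over `B`. -/
noncomputable def fiberECE {N : ℕ} (c p : Fin N → ℝ) : ℝ :=
  ∑ v ∈ Finset.image p Finset.univ,
    (((Finset.univ.filter (fun i => p i = v)).card : ℝ) / (N : ℝ)) *
      |(∑ i ∈ Finset.univ.filter (fun i => p i = v), c i) /
          ((Finset.univ.filter (fun i => p i = v)).card : ℝ) - v|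

/-- Proposition 1: for a `K`-class classifier (`K ≥ 2`) with accuracy
`q ∈ (0,1)`, the greatest expected calibration error achievable by any
confidence assignment `p` with values in `[1/K, 1]` is `1 − q/K`, and it is
achieved by the Maximum Miscalibration Attack assignment which gives
confidence `1/K` to correctly classified points and `1` to misclassified
points. -/
theorem mma_maximizes_fiber_ece (K N : ℕ) (hK : 2 ≤ K) (hN : 1 ≤ N)
    (c : Fin N → ℝ) (hc : ∀ i, c i = 0 ∨ c i = 1)
    (q : ℝ) (hq : q = (∑ i, c i) / (N : ℝ)) (hq0 : 0 < q) (hq1 : q < 1) :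
    (∀ p : Fin N → ℝ, (∀ i, 1 / (K : ℝ) ≤ p i ∧ p i ≤ 1) →
        fiberECE c p ≤ 1 - q / (K : ℝ)) ∧
    fiberECE c (fun i => if c i = 1 then 1 / (K : ℝ) else 1) = 1 - q / (K : ℝ) := by
  have hNpos : (0:ℝ) < N := by exact_mod_cast Nat.lt_of_lt_of_le Nat.zero_lt_one hN
  have hK2 : (2:ℝ) ≤ (K:ℝ) := by exact_mod_cast hK
  have hKpos : (0:ℝ) < (K:ℝ) := by linarith
  have hc01 : ∀ i, 0 ≤ c i ∧ c i ≤ 1 := by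
    intro i; rcases hc i with h | h <;> simp [h]
  constructor
  · -- upper bound
    intro p hp
    have key : ∀ v ∈ Finset.image p Finset.univ,
        (((Finset.univ.filter (fun i => p i = v)).card : ℝ) / (N : ℝ)) *
          |(∑ i ∈ Finset.univ.filter (fun i => p i = v), c i) /
              ((Finset.univ.filter (fun i => p i = v)).card : ℝ) - v|
        ≤ (((Finset.univ.filter (fun i => p i = v)).card : ℝ)
            - (∑ i ∈ Finset.univ.filter (fun i => p i = v), c i) / (K:ℝ)) / (N:ℝ) := by
      intro v hv
      obtain ⟨i, -, rfl⟩ := Finset.mem_image.mp hv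
      set B := Finset.univ.filter (fun j => p j = p i) with hB
      have hiB : i ∈ B := by simp [hB]
      set n : ℝ := (B.card : ℝ) with hn
      set s : ℝ := ∑ j ∈ B, c j with hs
      have hnpos : (0:ℝ) < n := by
        have h0 : 0 < B.card := Finset.card_pos.2 ⟨i, hiB⟩
        rw [hn]; exact_mod_cast h0
      have hs0 : 0 ≤ s := Finset.sum_nonneg fun j _ => (hc01 j).1
      have hsn : s ≤ n := by
        have := Finset.sum_le_card_nsmul B c 1 (fun j _ => (hc01 j).2)
        simpa [hn, hs] using this
      have hv1 : 1 / (K:ℝ) ≤ p i := (hp i).1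
      have hv2 : p i ≤ 1 := (hp i).2
      have h1 : s / (K:ℝ) ≤ n * p i := by
        calc s / (K:ℝ) ≤ n / (K:ℝ) := by gcongr
          _ = n * (1 / (K:ℝ)) := by ring
          _ ≤ n * p i := by gcongr
      have h2 : n * p i ≤ n := by nlinarith
      have h3 : s / (K:ℝ) ≤ s := by
        rw [div_le_iff₀ hKpos]; nlinarith
      have habs : |s / n - p i| = |s - n * p i| / n := by
        rw [div_sub' (ne_of_gt hnpos), abs_div, abs_of_pos hnpos]
      rw [habs]
      have heq : n / (N:ℝ) * (|s - n * p i| / n) = |s - n * p i| / (N:ℝ) := by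
        field_simp
      rw [heq]
      have hb : |s - n * p i| ≤ n - s / (K:ℝ) :=
        abs_le.2 ⟨by linarith, by linarith⟩
      gcongr
    have hsum := Finset.sum_le_sum key
    have hcard : ∑ v ∈ Finset.image p Finset.univ,
        ((Finset.univ.filter (fun i => p i = v)).card : ℝ) = (N:ℝ) := by
      have := Finset.sum_fiberwise_of_maps_to (s := (Finset.univ : Finset (Fin N)))
        (t := Finset.image p Finset.univ) (g := p)
        (fun i _ => Finset.mem_image_of_mem p (Finset.mem_univ i)) (fun _ : Fin N => (1:ℝ))
      simpa using this
    have hsums : ∑ v ∈ Finset.image p Finset.univ,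
        (∑ i ∈ Finset.univ.filter (fun i => p i = v), c i) = q * (N:ℝ) := by
      have := Finset.sum_fiberwise_of_maps_to (s := (Finset.univ : Finset (Fin N)))
        (t := Finset.image p Finset.univ) (g := p)
        (fun i _ => Finset.mem_image_of_mem p (Finset.mem_univ i)) c
      rw [this, hq]; field_simp
    calc fiberECE c p
        ≤ ∑ v ∈ Finset.image p Finset.univ,
            ((((Finset.univ.filter (fun i => p i = v)).card : ℝ)
              - (∑ i ∈ Finset.univ.filter (fun i => p i = v), c i) / (K:ℝ)) / (N:ℝ)) := hsum
      _ = ((∑ v ∈ Finset.image p Finset.univ,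
              ((Finset.univ.filter (fun i => p i = v)).card : ℝ))
            - (∑ v ∈ Finset.image p Finset.univ,
              (∑ i ∈ Finset.univ.filter (fun i => p i = v), c i)) / (K:ℝ)) / (N:ℝ) := by
          rw [← Finset.sum_div, Finset.sum_sub_distrib, Finset.sum_div]
      _ = 1 - q / (K:ℝ) := by
          rw [hcard, hsums]; field_simp
  · -- MMA achieves the bound
    set p : Fin N → ℝ := fun i => if c i = 1 then 1 / (K:ℝ) else 1 with hp
    have hne : (1:ℝ)/(K:ℝ) ≠ 1 := by
      intro h
      rw [div_eq_one_iff_eq (ne_of_gt hKpos)] at h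
      linarith
    have hfilter1 : Finset.univ.filter (fun i => p i = 1/(K:ℝ))
        = Finset.univ.filter (fun i => c i = 1) := by
      apply Finset.filter_congr
      intro i _
      simp only [hp]
      split_ifs with h <;> simp [h, hne, Ne.symm hne] <;> omega
    have hfilter2 : Finset.univ.filter (fun i => p i = 1)
        = Finset.univ.filter (fun i => ¬ c i = 1) := by
      apply Finset.filter_congr
      intro i _
      simp only [hp]
      split_ifs with h <;> simp [h, hne] <;> omega
    set m : ℕ := (Finset.univ.filter (fun i => c i = 1)).card with hm
    have hsum1 : ∑ i ∈ Finset.univ.filter (fun i => c i = 1), c i = (m:ℝ) := by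
      rw [Finset.sum_congr rfl (fun i hi => (Finset.mem_filter.1 hi).2)]
      simp [hm]
    have hsum2 : ∑ i ∈ Finset.univ.filter (fun i => ¬ c i = 1), c i = 0 := by
      apply Finset.sum_eq_zero
      intro i hi
      rcases hc i with h | h
      · exact h
      · exact absurd h (Finset.mem_filter.1 hi).2
    have htotal : ∑ i, c i = (m:ℝ) := by
      rw [← Finset.sum_filter_add_sum_filter_not Finset.univ (fun i => c i = 1) c,
        hsum1, hsum2, add_zero]
    have hmq : (m:ℝ) = q * N := by
      rw [hq, htotal]; field_simp
    have hmR : (0:ℝ) < (m:ℝ) := by rw [hmq]; exact mul_pos hq0 hNpos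
    have hmpos : 0 < m := by exact_mod_cast hmR
    have hcardnot : ((Finset.univ.filter (fun i => ¬ c i = 1)).card : ℝ) = (N:ℝ) - m := by
      have := Finset.card_filter_add_card_filter_not (s := (Finset.univ : Finset (Fin N)))
        (p := fun i => c i = 1)
      have h2 : m + (Finset.univ.filter (fun i => ¬ c i = 1)).card = N := by
        simpa [hm] using this
      have : ((Finset.univ.filter (fun i => ¬ c i = 1)).card : ℕ) = N - m := by omega
      rw [this]
      have hmN : m ≤ N := by omega
      push_cast [Nat.cast_sub hmN]
      ring
    have hnotpos : (0:ℝ) < (N:ℝ) - m := by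
      rw [hmq]; nlinarith
    have himg : Finset.image p Finset.univ = {1/(K:ℝ), 1} := by
      apply Finset.Subset.antisymm
      · intro v hv
        obtain ⟨i, -, rfl⟩ := Finset.mem_image.mp hv
        by_cases h : c i = 1 <;> simp [hp, h]
      · intro v hv
        rcases Finset.mem_insert.1 hv with h | h
        · subst h
          obtain ⟨i, hi⟩ := Finset.card_pos.1 hmpos
          have : c i = 1 := (Finset.mem_filter.1 hi).2
          exact Finset.mem_image.2 ⟨i, Finset.mem_univ i, by simp [hp, this]⟩
        · rw [Finset.mem_singleton] at h; subst h
          have : 0 < (Finset.univ.filter (fun i => ¬ c i = 1)).card := by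
            have : (0:ℝ) < ((Finset.univ.filter (fun i => ¬ c i = 1)).card : ℝ) := by
              rw [hcardnot]; exact hnotpos
            exact_mod_cast this
          obtain ⟨i, hi⟩ := Finset.card_pos.1 this
          have : ¬ c i = 1 := (Finset.mem_filter.1 hi).2
          exact Finset.mem_image.2 ⟨i, Finset.mem_univ i, by simp [hp, this]⟩
    show fiberECE c p = 1 - q / (K:ℝ)
    rw [fiberECE, himg]
    rw [Finset.sum_insert (by simp only [Finset.mem_singleton]; exact hne)]
    rw [Finset.sum_singleton]
    rw [hfilter1, hfilter2, hsum1, hsum2, hcardnot]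
    have h1K : 1/(K:ℝ) ≤ 1 := by rw [div_le_one hKpos]; linarith
    rw [div_self (ne_of_gt hmR), zero_div]
    rw [show |1 - 1/(K:ℝ)| = 1 - 1/(K:ℝ) from abs_of_nonneg (by linarith)]
    rw [show |(0:ℝ) - 1| = 1 by norm_num]
    rw [hmq]
    field_simp
    ring
end

section
/- Let K ≥ 1 be a natural number, N ≥ 1, let c : Fin N → ℝ take values in {0,1} with accuracy q = (∑ i, c i)/N, and suppose q > 0. Then for every confidence assignment p : Fin N → ℝ with 1/K ≤ p i ≤ 1 for all i and every partition of Fin N into finitely many nonempty bins, the expected calibration error ECE = ∑_m (|B_m|/N)·|acc(B_m) − conf(B_m)| is strictly less than 1. -/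
/-- A classifier with nonzero accuracy cannot reach 100% expected
calibration error: for any confidence assignment `p : Fin N → [1/K, 1]` and
any binning of the datapoints into nonempty bins, the expected calibration
error is strictly less than `1`. -/
theorem ece_lt_one_of_pos_accuracy (K N : ℕ) (hK : 1 ≤ K) (hN : 1 ≤ N)
    (c : Fin N → ℝ) (hc : ∀ i, c i = 0 ∨ c i = 1)
    (hq : 0 < (∑ i, c i) / (N : ℝ))
    (p : Fin N → ℝ) (hp : ∀ i, 1 / (K : ℝ) ≤ p i ∧ p i ≤ 1)
    (M : ℕ) (B : Fin M → Finset (Fin N))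
    (hBne : ∀ m, (B m).Nonempty)
    (hBdisj : ∀ m m' : Fin M, m ≠ m' → Disjoint (B m) (B m'))
    (hBcover : ∀ i : Fin N, ∃ m, i ∈ B m) :
    ∑ m : Fin M, ((B m).card : ℝ) / (N : ℝ) *
        |(∑ i ∈ B m, c i) / ((B m).card : ℝ) - (∑ i ∈ B m, p i) / ((B m).card : ℝ)|
      < 1 := by
  have hN0 : (0:ℝ) < N := by exact_mod_cast Nat.lt_of_lt_of_le Nat.zero_lt_one hN
  have hK0 : (0:ℝ) < 1 / K := by
    apply div_pos one_pos
    exact_mod_cast Nat.lt_of_lt_of_le Nat.zero_lt_one hK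
  -- there is a correct datapoint
  have hex : ∃ i, c i = 1 := by
    by_contra h
    push_neg at h
    have : ∀ i, c i = 0 := fun i => (hc i).resolve_right (h i)
    simp [this] at hq
  obtain ⟨i₀, hi₀⟩ := hex
  obtain ⟨m₀, hm₀⟩ := hBcover i₀
  -- cards sum to N
  have hcover : Finset.univ.biUnion B = (Finset.univ : Finset (Fin N)) := by
    apply Finset.eq_univ_of_forall
    intro i
    obtain ⟨m, hm⟩ := hBcover i
    exact Finset.mem_biUnion.2 ⟨m, Finset.mem_univ m, hm⟩
  have hcard : ∑ m : Fin M, (B m).card = N := by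
    have := Finset.card_biUnion (s := (Finset.univ : Finset (Fin M))) (t := B)
      (fun m _ m' _ h => hBdisj m m' h)
    rw [hcover] at this
    simpa using this.symm
  -- bounds per bin
  have hacc : ∀ m, 0 ≤ (∑ i ∈ B m, c i) / ((B m).card : ℝ) ∧
      (∑ i ∈ B m, c i) / ((B m).card : ℝ) ≤ 1 := by
    intro m
    have hpos : (0:ℝ) < (B m).card := by exact_mod_cast (hBne m).card_pos
    constructor
    · apply div_nonneg _ hpos.le
      apply Finset.sum_nonneg
      intro i _
      rcases hc i with h | h <;> simp [h]
    · rw [div_le_one hpos]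
      calc ∑ i ∈ B m, c i ≤ ∑ i ∈ B m, (1:ℝ) := by
            apply Finset.sum_le_sum
            intro i _
            rcases hc i with h | h <;> simp [h]
        _ = (B m).card := by simp
  have hconf : ∀ m, 1 / (K:ℝ) ≤ (∑ i ∈ B m, p i) / ((B m).card : ℝ) ∧
      (∑ i ∈ B m, p i) / ((B m).card : ℝ) ≤ 1 := by
    intro m
    have hpos : (0:ℝ) < (B m).card := by exact_mod_cast (hBne m).card_pos
    constructor
    · rw [le_div_iff₀ hpos]
      calc 1 / (K:ℝ) * (B m).card = ∑ i ∈ B m, 1 / (K:ℝ) := by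
            rw [Finset.sum_const]; ring
        _ ≤ ∑ i ∈ B m, p i := Finset.sum_le_sum fun i _ => (hp i).1
    · rw [div_le_one hpos]
      calc ∑ i ∈ B m, p i ≤ ∑ i ∈ B m, (1:ℝ) :=
            Finset.sum_le_sum fun i _ => (hp i).2
        _ = (B m).card := by simp
  have habs : ∀ m, |(∑ i ∈ B m, c i) / ((B m).card : ℝ) -
      (∑ i ∈ B m, p i) / ((B m).card : ℝ)| ≤ 1 := by
    intro m
    obtain ⟨ha0, ha1⟩ := hacc m
    obtain ⟨hp0, hp1⟩ := hconf m
    rw [abs_le]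
    constructor <;> nlinarith [hK0]
  -- strict bound on bin m₀
  have hstrict : |(∑ i ∈ B m₀, c i) / ((B m₀).card : ℝ) -
      (∑ i ∈ B m₀, p i) / ((B m₀).card : ℝ)| < 1 := by
    have hpos : (0:ℝ) < (B m₀).card := by exact_mod_cast (hBne m₀).card_pos
    have haccpos : 0 < (∑ i ∈ B m₀, c i) / ((B m₀).card : ℝ) := by
      apply div_pos _ hpos
      have : (1:ℝ) ≤ ∑ i ∈ B m₀, c i := by
        calc (1:ℝ) = c i₀ := hi₀.symm
          _ ≤ ∑ i ∈ B m₀, c i := by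
            apply Finset.single_le_sum (f := c) _ hm₀
            intro i _
            rcases hc i with h | h <;> simp [h]
      linarith
    obtain ⟨ha0, ha1⟩ := hacc m₀
    obtain ⟨hp0, hp1⟩ := hconf m₀
    rw [abs_lt]
    constructor <;> nlinarith [hK0]
  -- combine
  have hsum : ∑ m : Fin M, ((B m).card : ℝ) / (N : ℝ) = 1 := by
    rw [← Finset.sum_div]
    rw [div_eq_one_iff_eq hN0.ne']
    exact_mod_cast hcard
  calc ∑ m : Fin M, ((B m).card : ℝ) / (N : ℝ) *
        |(∑ i ∈ B m, c i) / ((B m).card : ℝ) - (∑ i ∈ B m, p i) / ((B m).card : ℝ)|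
      < ∑ m : Fin M, ((B m).card : ℝ) / (N : ℝ) := by
        apply Finset.sum_lt_sum
        · intro m _
          have hw : 0 ≤ ((B m).card : ℝ) / (N : ℝ) :=
            div_nonneg (Nat.cast_nonneg _) hN0.le
          calc ((B m).card : ℝ) / (N : ℝ) * _ ≤ ((B m).card : ℝ) / (N : ℝ) * 1 :=
                mul_le_mul_of_nonneg_left (habs m) hw
            _ = ((B m).card : ℝ) / (N : ℝ) := mul_one _
        · refine ⟨m₀, Finset.mem_univ m₀, ?_⟩
          have hw : 0 < ((B m₀).card : ℝ) / (N : ℝ) := by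
            apply div_pos _ hN0
            exact_mod_cast (hBne m₀).card_pos
          calc ((B m₀).card : ℝ) / (N : ℝ) * _ < ((B m₀).card : ℝ) / (N : ℝ) * 1 :=
                mul_lt_mul_of_pos_left hstrict hw
            _ = ((B m₀).card : ℝ) / (N : ℝ) := mul_one _
    _ = 1 := hsum
end

section
/- Let K ≥ 2 be a natural number, let r : Fin K → ℝ be a vector of logits with a strict maximum at index k (r_k > r_j for all j ≠ k), and let t be a real number with 1/K < t < 1. Then there exists a temperature T > 0 such that exp(r_k/T)/∑_j exp(r_j/T) = t; that is, temperature scaling can produce any prescribed confidence value strictly between 1/K and 1 for the predicted class. -/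
open Real Filter Set

/-- Temperature scaling can realize any target confidence strictly between
`1/K` and `1`: for logits `r : Fin K → ℝ` (`K ≥ 2`) with a strict maximum
at index `k`, and any `t` with `1/K < t < 1`, there exists a temperature
`T > 0` such that `exp(r_k/T) / ∑_j exp(r_j/T) = t`. -/
theorem temperature_scaling_hits_target_confidence (K : ℕ) (hK : 2 ≤ K)
    (r : Fin K → ℝ) (k : Fin K) (hk : ∀ j : Fin K, j ≠ k → r j < r k)
    (t : ℝ) (ht1 : 1 / (K : ℝ) < t) (ht2 : t < 1) :
    ∃ T : ℝ, 0 < T ∧ Real.exp (r k / T) / (∑ j, Real.exp (r j / T)) = t := by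
  have hKpos : (0:ℝ) < K := by positivity
  have htpos : 0 < t := lt_trans (by positivity) ht1
  set g : ℝ → ℝ := fun s => ∑ j, Real.exp (s * (r j - r k)) with hg
  have hgcont : Continuous g :=
    continuous_finset_sum _ fun j _ =>
      Real.continuous_exp.comp (continuous_id.mul continuous_const)
  have hg0 : g 0 = K := by simp [hg]
  have hinvt : 1 / t < K := by
    rw [div_lt_iff₀ htpos]
    rw [div_lt_iff₀ hKpos] at ht1
    linarith
  have hlim : Tendsto g atTop (nhds 1) := by
    have h : Tendsto g atTop (nhds (∑ j : Fin K, if j = k then (1:ℝ) else 0)) := by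
      apply tendsto_finset_sum
      intro j _
      by_cases hj : j = k
      · simp [hg, hj]
      · simp only [hj, if_false]
        have hd : r j - r k < 0 := sub_neg.mpr (hk j hj)
        exact Real.tendsto_exp_atBot.comp (tendsto_id.atTop_mul_const_of_neg hd)
    simpa using h
  have h1t : (1:ℝ) < 1 / t := one_lt_one_div htpos ht2
  obtain ⟨s₀, hs₀lt, hs₀pos⟩ :=
    ((hlim.eventually (gt_mem_nhds h1t)).and (eventually_gt_atTop 0)).exists
  have hIcc : (1 / t) ∈ Icc (g s₀) (g 0) := ⟨le_of_lt hs₀lt, by rw [hg0]; exact le_of_lt hinvt⟩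
  obtain ⟨s, hsmem, hgs⟩ :=
    intermediate_value_Icc' (le_of_lt hs₀pos) hgcont.continuousOn hIcc
  have hspos : 0 < s := by
    rcases lt_or_eq_of_le hsmem.1 with h | h
    · exact h
    · exfalso; rw [← h] at hgs; rw [hg0] at hgs; linarith
  refine ⟨s⁻¹, inv_pos.mpr hspos, ?_⟩
  have hsum : (∑ j, Real.exp (r j / s⁻¹)) = Real.exp (s * r k) * g s := by
    rw [hg, Finset.mul_sum]
    apply Finset.sum_congr rfl
    intro j _
    rw [← Real.exp_add]
    congr 1
    field_simp
    ring
  have hrk : r k / s⁻¹ = s * r k := by field_simp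
  rw [hsum, hrk, hgs]
  rw [div_mul_eq_div_div, div_self (Real.exp_ne_zero _), one_div_one_div]
end
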